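/- Let W₁,…,Wₖ be unitary n×n matrices, q a probability distribution, W̄ = Σₐ q(a) Wₐ, and δ = Σₐ q(a) ‖Wₐ − W̄‖². Then for any matrix σ with trace norm at most 1, the trace norm of Σₐ q(a) Wₐ σ Wₐ† − W̄ σ W̄† is at most δ. -/

import Mathlib

/-!
Expanding the square with `∑ q a = 1` and `W̄ = ∑ q a • W a` gives the variance identity
`∑ q a • W a σ W aᴴ - W̄ σ W̄ᴴ = ∑ q a • (W a - W̄) σ (W a - W̄)ᴴ`. Pair this convex combination
with a contraction `U` attaining its trace norm, `‖M‖₁ = Re tr (U M)`: the sum splits, and with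
`D = W a - W̄` each term `Re tr (U D σ Dᴴ) = Re tr (Dᴴ U D σ)` is at most `‖D‖² ‖σ‖₁` by Hölder's
inequality `Re tr (X σ) ≤ ‖X‖ ‖σ‖₁`. Both duality facts are read off a polar decomposition
`A = B · diag(s) · Vᴴ`, where `V` diagonalises `Aᴴ A`, `s` are the singular values and `B` is a
partial isometry.
-/

open scoped Matrix.Norms.L2Operator ComplexOrder Kronecker
open Matrix Complex

/-- The positive semidefinite square root of a positive semidefinite matrix
(the definition Mathlib had as `Matrix.PosSemidef.sqrt`, since removed). -/
noncomputable def Matrix.PosSemidef.sqrt {n 𝕜 : Type*} [Fintype n] [RCLike 𝕜] [DecidableEq n]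
    {A : Matrix n n 𝕜} (hA : Matrix.PosSemidef A) : Matrix n n 𝕜 :=
  hA.1.eigenvectorUnitary.1 * Matrix.diagonal ((↑) ∘ (√·) ∘ hA.1.eigenvalues) *
    (star hA.1.eigenvectorUnitary : Matrix n n 𝕜)

/-- The trace norm (sum of singular values) of a square complex matrix. -/
noncomputable def traceNorm {n : Type*} [Fintype n] [DecidableEq n] (A : Matrix n n ℂ) : ℝ :=
  ((Matrix.posSemidef_conjTranspose_mul_self A).sqrt.trace).re

theorem sum_smul_mul_mul_star_sub_eq {ι A : Type*} [Ring A] [StarRing A] [Algebra ℂ A]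
    [StarModule ℂ A] (s : Finset ι) (q : ι → ℝ) (hq : ∑ a ∈ s, q a = 1) (x : ι → A) (xbar y : A)
    (hxbar : ∑ a ∈ s, (q a : ℂ) • x a = xbar) :
    ∑ a ∈ s, (q a : ℂ) • (x a * y * star (x a)) - xbar * y * star xbar =
      ∑ a ∈ s, (q a : ℂ) • ((x a - xbar) * y * star (x a - xbar)) := by
  have hleft : ∑ a ∈ s, (q a : ℂ) • (x a * y * star xbar) = xbar * y * star xbar := by
    simp only [← hxbar, Finset.sum_mul, smul_mul_assoc]
  have hright : ∑ a ∈ s, (q a : ℂ) • (xbar * y * star (x a)) = xbar * y * star xbar := by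
    simp only [← hxbar, star_sum, star_smul, Complex.star_def, Complex.conj_ofReal,
      Finset.mul_sum, mul_smul_comm]
  have hconst : ∑ a ∈ s, (q a : ℂ) • (xbar * y * star xbar) = xbar * y * star xbar := by
    rw [← Finset.sum_smul, ← Complex.ofReal_sum, hq, Complex.ofReal_one, one_smul]
  simp only [sub_mul, mul_sub, star_sub, smul_sub, Finset.sum_sub_distrib, hleft, hright, hconst]
  abel

lemma Matrix.norm_apply_le_l2_opNorm {𝕜 m n : Type*} [RCLike 𝕜] [Fintype m] [Fintype n]
    [DecidableEq n] (A : Matrix m n 𝕜) (i : m) (j : n) : ‖A i j‖ ≤ ‖A‖ := by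
  set x := EuclideanSpace.single j (1 : 𝕜)
  calc ‖A i j‖ = ‖(EuclideanSpace.equiv m 𝕜).symm (A *ᵥ x) i‖ := by simp [x]
    _ ≤ ‖(EuclideanSpace.equiv m 𝕜).symm (A *ᵥ x)‖ := PiLp.norm_apply_le _ _
    _ ≤ ‖A‖ * ‖x‖ := A.l2_opNorm_mulVec _
    _ = ‖A‖ := by simp [x]

section TraceNorm

variable {m : Type*} [Fintype m] [DecidableEq m] (A : Matrix m m ℂ)

-- Unsorted, indexed like the eigenvectors `rightSingularVectors A` of `Aᴴ * A`.
noncomputable def singularValues (i : m) : ℝ :=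
  √((posSemidef_conjTranspose_mul_self A).1.eigenvalues i)

noncomputable def rightSingularVectors : Matrix m m ℂ :=
  (posSemidef_conjTranspose_mul_self A).1.eigenvectorUnitary

lemma singularValues_nonneg (i : m) : 0 ≤ singularValues A i := Real.sqrt_nonneg _

lemma rightSingularVectors_mem_unitary : rightSingularVectors A ∈ unitary (Matrix m m ℂ) :=
  (posSemidef_conjTranspose_mul_self A).1.eigenvectorUnitary.2

lemma traceNorm_eq_sum_singularValues : traceNorm A = ∑ i, singularValues A i := by
  have hV := rightSingularVectors_mem_unitary A
  change (rightSingularVectors A * diagonal (fun i => (singularValues A i : ℂ)) *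
    star (rightSingularVectors A)).trace.re = _
  rw [trace_mul_cycle, Unitary.star_mul_self_of_mem hV, one_mul, trace_diagonal, re_sum]
  simp

lemma conjTranspose_mul_self_mul_rightSingularVectors :
    (A * rightSingularVectors A)ᴴ * (A * rightSingularVectors A) =
      diagonal (fun i => (singularValues A i : ℂ) ^ 2) := by
  have h := posSemidef_conjTranspose_mul_self A
  have hdiag := h.1.conjStarAlgAut_star_eigenvectorUnitary
  rw [Unitary.conjStarAlgAut_star_apply] at hdiag
  simp only [singularValues, ← ofReal_pow, Real.sq_sqrt (h.eigenvalues_nonneg _)]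
  rw [conjTranspose_mul, ← star_eq_conjTranspose]
  simp only [Matrix.mul_assoc] at hdiag ⊢
  exact hdiag

lemma mul_rightSingularVectors_apply_eq_zero {j : m} (hj : singularValues A j = 0) (i : m) :
    (A * rightSingularVectors A) i j = 0 := by
  set C := A * rightSingularVectors A
  have hjj := congr_fun₂ (conjTranspose_mul_self_mul_rightSingularVectors A) j j
  simp only [hj, mul_apply, conjTranspose_apply, diagonal_apply_eq, ne_eq, OfNat.ofNat_ne_zero,
    not_false_eq_true, zero_pow, ofReal_zero] at hjj
  have hsq := (Finset.sum_eq_zero_iff_of_nonneg fun k _ => star_mul_self_nonneg (C k j)).mp hjj i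
    (Finset.mem_univ i)
  simpa using hsq

lemma exists_norm_le_one_and_eq_mul_diagonal_singularValues :
    ∃ B : Matrix m m ℂ, ‖B‖ ≤ 1 ∧
      Bᴴ * B * diagonal (fun i => (singularValues A i : ℂ)) =
        diagonal (fun i => (singularValues A i : ℂ)) ∧
      A = B * diagonal (fun i => (singularValues A i : ℂ)) * (rightSingularVectors A)ᴴ := by
  set s := singularValues A with hs
  set C := A * rightSingularVectors A
  -- `B = C * diag(s)⁻¹` is a partial isometry; `(0 : ℂ)⁻¹ = 0` handles the kernel of `A`.
  set B := C * diagonal (fun i => (s i : ℂ)⁻¹)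
  have hBB : Bᴴ * B = diagonal (fun i => (s i : ℂ)⁻¹ * s i) := by
    rw [conjTranspose_mul, diagonal_conjTranspose, Matrix.mul_assoc, ← Matrix.mul_assoc Cᴴ,
      conjTranspose_mul_self_mul_rightSingularVectors, diagonal_mul_diagonal, diagonal_mul_diagonal]
    simp only [← hs, Pi.star_apply, star_inv₀, Complex.star_def, Complex.conj_ofReal, sq,
      mul_self_mul_inv]
  have hnorm : ‖B‖ ≤ 1 := by
    have hB2 : ‖B‖ * ‖B‖ ≤ 1 := by
      rw [← l2_opNorm_conjTranspose_mul_self, hBB, l2_opNorm_diagonal]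
      refine (pi_norm_le_iff_of_nonneg zero_le_one).mpr fun i => ?_
      rcases eq_or_ne (s i : ℂ) 0 with h | h <;> simp [h]
    nlinarith [norm_nonneg B]
  have hBs : B * diagonal (fun i => (s i : ℂ)) = C := by
    ext i j
    rw [Matrix.mul_assoc, diagonal_mul_diagonal, mul_diagonal]
    rcases eq_or_ne (s j) 0 with h | h
    · simpa [h] using (mul_rightSingularVectors_apply_eq_zero A h i).symm
    · have h' : (s j : ℂ) ≠ 0 := by exact_mod_cast h
      simp [h']
  refine ⟨B, hnorm, ?_, ?_⟩
  · simp only [hBB, diagonal_mul_diagonal, inv_mul_mul_self]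
  · rw [hBs, Matrix.mul_assoc, ← star_eq_conjTranspose,
      Unitary.mul_star_self_of_mem (rightSingularVectors_mem_unitary A), mul_one]

lemma traceNorm_nonneg : 0 ≤ traceNorm A := by
  rw [traceNorm_eq_sum_singularValues]
  exact Finset.sum_nonneg fun i _ => singularValues_nonneg A i

lemma re_trace_mul_le_norm_mul_traceNorm (X : Matrix m m ℂ) :
    (X * A).trace.re ≤ ‖X‖ * traceNorm A := by
  obtain ⟨B, hB, -, hA⟩ := exists_norm_le_one_and_eq_mul_diagonal_singularValues A
  set V := rightSingularVectors A
  set D := diagonal (fun i => (singularValues A i : ℂ))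
  set M := Vᴴ * X * B
  have hM : ‖M‖ ≤ ‖X‖ := calc
    ‖M‖ ≤ ‖Vᴴ * X‖ * ‖B‖ := l2_opNorm_mul _ _
    _ ≤ ‖X‖ * 1 := by
      rw [← star_eq_conjTranspose,
        CStarRing.norm_mem_unitary_mul X (Unitary.star_mem (rightSingularVectors_mem_unitary A))]
      gcongr
    _ = ‖X‖ := mul_one _
  have htr : (X * A).trace = (M * D).trace := by
    rw [hA, show X * (B * D * Vᴴ) = X * B * D * Vᴴ by simp only [Matrix.mul_assoc],
      trace_mul_comm, show Vᴴ * (X * B * D) = M * D by simp only [M, Matrix.mul_assoc]]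
  rw [htr, show (M * D).trace = ∑ i, M i i * singularValues A i by simp [D, trace, mul_diagonal],
    re_sum, traceNorm_eq_sum_singularValues, Finset.mul_sum]
  refine Finset.sum_le_sum fun i _ => ?_
  rw [re_mul_ofReal]
  gcongr
  · exact singularValues_nonneg A i
  · exact (re_le_norm _).trans ((norm_apply_le_l2_opNorm M i i).trans hM)

lemma exists_norm_le_one_re_trace_mul_eq_traceNorm :
    ∃ U : Matrix m m ℂ, ‖U‖ ≤ 1 ∧ (U * A).trace.re = traceNorm A := by
  obtain ⟨B, hB, hBB, hA⟩ := exists_norm_le_one_and_eq_mul_diagonal_singularValues A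
  set V := rightSingularVectors A
  set D := diagonal (fun i => (singularValues A i : ℂ))
  have hV := rightSingularVectors_mem_unitary A
  refine ⟨V * Bᴴ, ?_, ?_⟩
  · rwa [CStarRing.norm_mem_unitary_mul _ hV, l2_opNorm_conjTranspose]
  · have htr : (V * Bᴴ * A).trace = D.trace := calc
      (V * Bᴴ * A).trace = (V * (Bᴴ * B * D) * Vᴴ).trace := by
        rw [hA]; simp only [Matrix.mul_assoc]
      _ = D.trace := by
        rw [hBB, trace_mul_cycle, ← star_eq_conjTranspose, Unitary.star_mul_self_of_mem hV,
          one_mul]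
    simp [htr, D, traceNorm_eq_sum_singularValues]

lemma re_trace_mul_mul_mul_conjTranspose_le (U D : Matrix m m ℂ) :
    (U * (D * A * Dᴴ)).trace.re ≤ ‖U‖ * ‖D‖ ^ 2 * traceNorm A := by
  have hcyc : (U * (D * A * Dᴴ)).trace = (Dᴴ * U * D * A).trace := by
    rw [show U * (D * A * Dᴴ) = U * D * A * Dᴴ by simp only [Matrix.mul_assoc], trace_mul_comm]
    simp only [Matrix.mul_assoc]
  have hnorm : ‖Dᴴ * U * D‖ ≤ ‖U‖ * ‖D‖ ^ 2 := calc
    ‖Dᴴ * U * D‖ ≤ ‖Dᴴ‖ * ‖U‖ * ‖D‖ := by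
      grw [l2_opNorm_mul, l2_opNorm_mul]
    _ = ‖U‖ * ‖D‖ ^ 2 := by rw [l2_opNorm_conjTranspose]; ring
  rw [hcyc]
  grw [re_trace_mul_le_norm_mul_traceNorm, hnorm]
  exact traceNorm_nonneg A

lemma traceNorm_sum_smul_mul_mul_conjTranspose_le {ι : Type*} (s : Finset ι) (q : ι → ℝ)
    (hq : ∀ a ∈ s, 0 ≤ q a) (D : ι → Matrix m m ℂ) :
    traceNorm (∑ a ∈ s, (q a : ℂ) • (D a * A * (D a)ᴴ)) ≤
      (∑ a ∈ s, q a * ‖D a‖ ^ 2) * traceNorm A := by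
  obtain ⟨U, hU, hUtr⟩ := exists_norm_le_one_re_trace_mul_eq_traceNorm
    (∑ a ∈ s, (q a : ℂ) • (D a * A * (D a)ᴴ))
  rw [← hUtr, Finset.mul_sum, trace_sum, re_sum, Finset.sum_mul]
  refine Finset.sum_le_sum fun a ha => ?_
  rw [mul_smul_comm, trace_smul, smul_eq_mul, re_ofReal_mul, mul_assoc (q a)]
  refine mul_le_mul_of_nonneg_left ?_ (hq a ha)
  refine (re_trace_mul_mul_mul_conjTranspose_le A U (D a)).trans ?_
  rw [mul_assoc]
  exact mul_le_of_le_one_left (mul_nonneg (sq_nonneg _) (traceNorm_nonneg A)) hU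

end TraceNorm

theorem stmt_2_general {n k : ℕ} (W : Fin k → Matrix (Fin n) (Fin n) ℂ)
    (q : Fin k → ℝ) (hq0 : ∀ a, 0 ≤ q a) (hq1 : ∑ a, q a = 1)
    (Wbar : Matrix (Fin n) (Fin n) ℂ) (hWbar : Wbar = ∑ a, (q a : ℂ) • W a)
    (δ : ℝ) (hδ : δ = ∑ a, q a * ‖W a - Wbar‖ ^ 2)
    (σ : Matrix (Fin n) (Fin n) ℂ) (hσ : traceNorm σ ≤ 1) :
    traceNorm (∑ a, (q a : ℂ) • (W a * σ * (W a)ᴴ) - Wbar * σ * Wbarᴴ) ≤ δ := by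
  have hvar := sum_smul_mul_mul_star_sub_eq Finset.univ q hq1 W Wbar σ hWbar.symm
  simp only [star_eq_conjTranspose] at hvar
  rw [hvar, hδ]
  calc _ ≤ (∑ a, q a * ‖W a - Wbar‖ ^ 2) * traceNorm σ :=
        traceNorm_sum_smul_mul_mul_conjTranspose_le σ Finset.univ q (fun a _ => hq0 a) _
    _ ≤ ∑ a, q a * ‖W a - Wbar‖ ^ 2 :=
        mul_le_of_le_one_right (Finset.sum_nonneg fun a _ => mul_nonneg (hq0 a) (sq_nonneg _)) hσ

theorem stmt_2 {n k : ℕ} (W : Fin k → Matrix (Fin n) (Fin n) ℂ)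
    (hW : ∀ a, W a ∈ Matrix.unitaryGroup (Fin n) ℂ)
    (q : Fin k → ℝ) (hq0 : ∀ a, 0 ≤ q a) (hq1 : ∑ a, q a = 1)
    (Wbar : Matrix (Fin n) (Fin n) ℂ) (hWbar : Wbar = ∑ a, (q a : ℂ) • W a)
    (δ : ℝ) (hδ : δ = ∑ a, q a * ‖W a - Wbar‖ ^ 2)
    (σ : Matrix (Fin n) (Fin n) ℂ) (hσ : traceNorm σ ≤ 1) :
    traceNorm (∑ a, (q a : ℂ) • (W a * σ * (W a)ᴴ) - Wbar * σ * Wbarᴴ) ≤ δ :=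
  stmt_2_general W q hq0 hq1 Wbar hWbar δ hδ σ hσ
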